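/- arXiv:cs/0402060 — 2 statements merged into one kernel-verified Lean document; each statement's English description precedes it below -/
import Mathlib

section
/- Let H^B be a compatible ergodic m-variate mapping on (Z_2)^m and let x_0, x_1, x_2, ... be the trajectory x_{i+1} = H^B(x_i) mod 2^n with coordinates x_i = (x_i^0,...,x_i^{m-1}). Then for each s ∈ {0,...,n−1} and j ∈ {0,...,m−1}, the binary sequence {δ_s(x_i^j) : i = 0,1,2,...} is purely periodic with period length exactly 2^{ms+j+1}. -/
/-!
Bit `m s + j` of `B (x_i)` is bit `s` of the `j`-th coordinate of `x_i`, and since `B` reads the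
first `t ≤ m n` bits of `B y` off the coordinates of `y` mod `2^n`, the reductions of `B (x_i)`
mod `2^t` form a trajectory of `H mod 2^t`, which is a single cycle of length `2^t`. Hence, with
`k = m s + j`, the `k`-th bit of `B (x_i)` has period `2^(k+1)`, and it flips after `2^k` steps,
because these steps fix `B (x_i)` mod `2^k` but not mod `2^(k+1)`. A period `p < 2^(k+1)` would
make `gcd (p, 2^(k+1))`, a divisor of `2^k`, a period too, contradicting the flip.
-/

open scoped BigOperators

/-- The `j`-th binary digit of a 2-adic integer, as an element of `ZMod 2`. -/
noncomputable def bit2 (j : ℕ) (x : ℤ_[2]) : ZMod 2 := ((x.appr (j+1) / 2^j : ℕ) : ZMod 2)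

/-- Compatibility = 1-Lipschitz w.r.t. the 2-adic metric. -/
def Compatible (f : ℤ_[2] → ℤ_[2]) : Prop := ∀ x y : ℤ_[2], ‖f x - f y‖ ≤ ‖x - y‖

/-- Reduction of a 2-adic integer modulo `2^n`. -/
noncomputable def padMod (n : ℕ) (x : ℤ_[2]) : ZMod (2^n) := (x.appr n : ZMod (2^n))

/-- The map induced by `f : ℤ₂ → ℤ₂` on `ZMod (2^n)` (via canonical lifts). -/
noncomputable def inducedMap (n : ℕ) (f : ℤ_[2] → ℤ_[2]) : ZMod (2^n) → ZMod (2^n) :=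
  fun a => padMod n (f ((a.val : ℕ) : ℤ_[2]))

/-- A self-map of a set is a single cycle (transitive on points). -/
def IsSingleCycle {α : Type*} (g : α → α) : Prop := ∀ a b : α, ∃ k : ℕ, g^[k] a = b

/-- Measure preservation: `f` induces a bijection modulo `2^n` for every `n`. -/
def MeasurePreservingZ (f : ℤ_[2] → ℤ_[2]) : Prop := ∀ n : ℕ, Function.Bijective (inducedMap n f)

/-- Ergodicity: `f` induces a single-cycle permutation modulo `2^n` for every `n`. -/
def ErgodicZ (f : ℤ_[2] → ℤ_[2]) : Prop := ∀ n : ℕ, IsSingleCycle (inducedMap n f)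

/-- Induced map modulo `2^n` of an `m`-variate map on `(ℤ₂)^m`. -/
noncomputable def inducedMapM (m n : ℕ) (G : (Fin m → ℤ_[2]) → Fin m → ℤ_[2]) :
    (Fin m → ZMod (2^n)) → Fin m → ZMod (2^n) :=
  fun a j => padMod n (G (fun i => (((a i).val : ℕ) : ℤ_[2])) j)

/-- Coordinatewise compatibility of an `m`-variate map. -/
def CompatibleM (m : ℕ) (G : (Fin m → ℤ_[2]) → Fin m → ℤ_[2]) : Prop :=
  ∀ (n : ℕ) (x y : Fin m → ℤ_[2]), (∀ i, padMod n (x i) = padMod n (y i)) →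
    ∀ j, padMod n (G x j) = padMod n (G y j)

/-- Ergodicity of an `m`-variate map: single cycle modulo `2^n` for all `n`. -/
def ErgodicM (m : ℕ) (G : (Fin m → ℤ_[2]) → Fin m → ℤ_[2]) : Prop :=
  ∀ n : ℕ, IsSingleCycle (inducedMapM m n G)

/-- The 2-adic integer with prescribed binary digits. -/
noncomputable def ofBits (b : ℕ → ZMod 2) : ℤ_[2] := ∑' i : ℕ, ((b i).val : ℤ_[2]) * 2^i

/-- Bitwise XOR of 2-adic integers. -/
noncomputable def xor2 (x y : ℤ_[2]) : ℤ_[2] := ofBits (fun i => bit2 i x + bit2 i y)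

/-- Bitwise AND of 2-adic integers. -/
noncomputable def and2 (x y : ℤ_[2]) : ℤ_[2] := ofBits (fun i => bit2 i x * bit2 i y)

/-- Bitwise AND of a list, the empty AND being `-1` (the all-ones string). -/
noncomputable def andL (l : List ℤ_[2]) : ℤ_[2] := l.foldr and2 (-1)

/-- The `s`-th binary digit of an element of `ZMod (2^n)`. -/
def bitZM (n s : ℕ) (a : ZMod (2^n)) : ZMod 2 := ((a.val / 2^s : ℕ) : ZMod 2)

open Function

theorem Function.Periodic.nat_gcd {β : Type*} {f : ℕ → β} {p q : ℕ} (hp : Periodic f p)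
    (hq : Periodic f q) : Periodic f (p.gcd q) := by
  induction p, q using Nat.gcd.induction with
  | H0 q => simpa using hq
  | H1 p q _ ih =>
    rw [Nat.gcd_rec]
    refine ih (fun i => ?_) hp
    have := hp.nat_mul (q / p) (i + q % p)
    rw [Nat.cast_id, add_assoc, Nat.mod_add_div', hq] at this
    exact this.symm

theorem Function.Periodic.two_pow_succ_le {β : Type*} {f : ℕ → β} {k p : ℕ}
    (hk : Periodic f (2 ^ (k + 1))) (hflip : ∀ i, f (i + 2 ^ k) ≠ f i) (hp : Periodic f p)
    (hp0 : 0 < p) : 2 ^ (k + 1) ≤ p := by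
  have hgcd : p.gcd (2 ^ (k + 1)) = 2 ^ (k + 1) := by
    refine Nat.eq_prime_pow_of_dvd_least_prime_pow Nat.prime_two ?_ (Nat.gcd_dvd_right _ _)
    rintro ⟨c, hc⟩
    apply hflip 0
    rw [hc, mul_comm]
    exact (hp.nat_gcd hk).nat_mul c 0
  exact hgcd ▸ Nat.le_of_dvd hp0 (Nat.gcd_dvd_left _ _)

theorem add_eq_iterate_of_succ {α : Type*} {g : α → α} {w : ℕ → α}
    (hw : ∀ i, w (i + 1) = g (w i)) (i c : ℕ) : w (i + c) = g^[c] (w i) := by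
  induction c with
  | zero => rfl
  | succ c ih => rw [← add_assoc, hw, ih, iterate_succ_apply']

section SingleCycle

variable {α : Type*} [Fintype α] {g : α → α}

theorem IsSingleCycle.minimalPeriod_eq_card (hg : IsSingleCycle g) (a : α) :
    minimalPeriod g a = Fintype.card α := by
  obtain ⟨k, hk⟩ := hg (g a) a
  have hpos : 0 < minimalPeriod g a :=
    IsPeriodicPt.minimalPeriod_pos k.succ_pos <| by
      rwa [IsPeriodicPt, IsFixedPt, iterate_succ_apply]
  refine minimalPeriod_le_card.antisymm ?_
  calc Fintype.card α ≤ Fintype.card (Fin (minimalPeriod g a)) := by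
        refine Fintype.card_le_of_surjective (fun r => g^[r] a) fun b => ?_
        obtain ⟨n, rfl⟩ := hg a b
        exact ⟨⟨n % minimalPeriod g a, Nat.mod_lt n hpos⟩, iterate_mod_minimalPeriod_eq⟩
    _ = minimalPeriod g a := Fintype.card_fin _

theorem IsSingleCycle.iterate_eq_self_iff (hg : IsSingleCycle g) (a : α) (c : ℕ) :
    g^[c] a = a ↔ Fintype.card α ∣ c := by
  rw [← hg.minimalPeriod_eq_card a]
  exact isPeriodicPt_iff_minimalPeriod_dvd

end SingleCycle

theorem val_padMod (n : ℕ) (x : ℤ_[2]) : (padMod n x).val = x.appr n := by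
  rw [padMod, ZMod.val_natCast, Nat.mod_eq_of_lt (PadicInt.appr_lt x n)]

theorem padMod_eq_padMod_iff {n : ℕ} {x y : ℤ_[2]} :
    padMod n x = padMod n y ↔ x.appr n = y.appr n := by
  rw [← val_padMod, ← val_padMod, (ZMod.val_injective _).eq_iff]

theorem padMod_natCast (n c : ℕ) : padMod n (c : ℤ_[2]) = c :=
  map_natCast (PadicInt.toZModPow n) c

theorem padMod_val_natCast {n : ℕ} (a : ZMod (2 ^ n)) :
    padMod n ((a.val : ℕ) : ℤ_[2]) = a := by
  rw [padMod_natCast, ZMod.natCast_val, ZMod.cast_id]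

theorem appr_natCast (n c : ℕ) : (c : ℤ_[2]).appr n = c % 2 ^ n := by
  rw [← val_padMod, padMod_natCast, ZMod.val_natCast]

theorem appr_mod_two_pow (x : ℤ_[2]) {s t : ℕ} (h : s ≤ t) : x.appr t % 2 ^ s = x.appr s := by
  obtain ⟨c, hc⟩ := PadicInt.dvd_appr_sub_appr x s t h
  rw [Nat.eq_add_of_sub_eq (PadicInt.appr_mono x h) hc, Nat.mul_add_mod,
    Nat.mod_eq_of_lt (PadicInt.appr_lt x s)]

theorem natCast_div_two_pow_eq_iff_testBit {a b k : ℕ} :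
    ((a / 2 ^ k : ℕ) : ZMod 2) = ((b / 2 ^ k : ℕ) : ZMod 2) ↔ a.testBit k = b.testBit k := by
  rw [ZMod.natCast_eq_natCast_iff', Nat.testBit_eq_decide_div_mod_eq,
    Nat.testBit_eq_decide_div_mod_eq, decide_eq_decide]
  omega

theorem bit2_eq_bit2_iff {x y : ℤ_[2]} {k t : ℕ} (hk : k < t) :
    bit2 k x = bit2 k y ↔ (x.appr t).testBit k = (y.appr t).testBit k := by
  rw [bit2, bit2, natCast_div_two_pow_eq_iff_testBit, ← appr_mod_two_pow x hk,
    ← appr_mod_two_pow y hk, Nat.testBit_mod_two_pow, Nat.testBit_mod_two_pow]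
  simp

theorem padMod_eq_padMod_iff_bit2 {t : ℕ} {x y : ℤ_[2]} :
    padMod t x = padMod t y ↔ ∀ k < t, bit2 k x = bit2 k y := by
  rw [padMod_eq_padMod_iff]
  refine ⟨fun h k hk => (bit2_eq_bit2_iff hk).2 (h ▸ rfl),
    fun h => Nat.eq_of_testBit_eq fun k => ?_⟩
  by_cases hk : k < t
  · exact (bit2_eq_bit2_iff hk).1 (h k hk)
  · have hle : 2 ^ t ≤ 2 ^ k := Nat.pow_le_pow_right two_pos (not_lt.1 hk)
    rw [Nat.testBit_eq_false_of_lt ((PadicInt.appr_lt x t).trans_le hle),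
      Nat.testBit_eq_false_of_lt ((PadicInt.appr_lt y t).trans_le hle)]

theorem bit2_ne_bit2_of_padMod {x y : ℤ_[2]} {k : ℕ} (hlow : padMod k x = padMod k y)
    (hne : padMod (k + 1) x ≠ padMod (k + 1) y) : bit2 k x ≠ bit2 k y := by
  intro hk
  refine hne (padMod_eq_padMod_iff_bit2.2 fun l hl => ?_)
  rcases Nat.lt_succ_iff_lt_or_eq.1 hl with hl | rfl
  · exact padMod_eq_padMod_iff_bit2.1 hlow l hl
  · exact hk

theorem bitZM_eq_bit2 (n s : ℕ) (a : ZMod (2 ^ n)) :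
    bitZM n s a = bit2 s ((a.val : ℕ) : ℤ_[2]) := by
  rw [bitZM, bit2, appr_natCast, pow_succ, Nat.mod_mul_right_div_self, ZMod.natCast_mod]

theorem padMod_eq_padMod_iff_norm_le {t : ℕ} {x y : ℤ_[2]} :
    padMod t x = padMod t y ↔ ‖x - y‖ ≤ (2 : ℝ) ^ (-(t : ℤ)) := by
  rw [padMod, padMod, ← sub_eq_zero]
  change PadicInt.toZModPow t x - PadicInt.toZModPow t y = 0 ↔ _
  rw [← map_sub, ← RingHom.mem_ker, PadicInt.ker_toZModPow,
    ← PadicInt.norm_le_pow_iff_mem_span_pow]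
  norm_num

theorem Compatible.padMod_apply {H : ℤ_[2] → ℤ_[2]} (hH : Compatible H) (t : ℕ) (u : ℤ_[2]) :
    padMod t (H u) = inducedMap t H (padMod t u) := by
  have hu : padMod t u = padMod t ((padMod t u).val : ℤ_[2]) := (padMod_val_natCast _).symm
  rw [padMod_eq_padMod_iff_norm_le] at hu
  exact padMod_eq_padMod_iff_norm_le.2 ((hH _ _).trans hu)

section Interleaving

variable {m : ℕ} (hm : 0 < m)

def IsBitInterleaving (B : (Fin m → ℤ_[2]) → ℤ_[2]) : Prop :=
  ∀ (x : Fin m → ℤ_[2]) (k : ℕ), bit2 k (B x) = bit2 (k / m) (x ⟨k % m, Nat.mod_lt k hm⟩)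

variable {hm} {B : (Fin m → ℤ_[2]) → ℤ_[2]}

theorem IsBitInterleaving.bit2_apply (hB : IsBitInterleaving hm B) (x : Fin m → ℤ_[2]) (s : ℕ)
    (j : Fin m) : bit2 (m * s + j) (B x) = bit2 s (x j) := by
  rw [hB, Nat.mul_add_div hm, Nat.div_eq_of_lt j.2, add_zero]
  congr
  simp [Nat.mod_eq_of_lt j.2]

theorem IsBitInterleaving.padMod_congr (hB : IsBitInterleaving hm B) {n t : ℕ}
    (ht : t ≤ m * n) {u v : Fin m → ℤ_[2]} (h : ∀ r, padMod n (u r) = padMod n (v r)) :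
    padMod t (B u) = padMod t (B v) := by
  refine padMod_eq_padMod_iff_bit2.2 fun k hk => ?_
  rw [hB, hB]
  refine padMod_eq_padMod_iff_bit2.1 (h _) _ ?_
  rw [Nat.div_lt_iff_lt_mul hm, mul_comm]
  omega

noncomputable def liftCoords {m n : ℕ} (a : Fin m → ZMod (2 ^ n)) : Fin m → ℤ_[2] :=
  fun r => ((a r).val : ℤ_[2])

theorem IsBitInterleaving.padMod_trajectory (hB : IsBitInterleaving hm B) {H : ℤ_[2] → ℤ_[2]}
    (hH : Compatible H) {G : (Fin m → ℤ_[2]) → Fin m → ℤ_[2]} (hG : ∀ x, B (G x) = H (B x))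
    {n : ℕ} {x : ℕ → Fin m → ZMod (2 ^ n)} (hx : ∀ i, x (i + 1) = inducedMapM m n G (x i))
    {t : ℕ} (ht : t ≤ m * n) (i c : ℕ) :
    padMod t (B (liftCoords (x (i + c)))) =
      (inducedMap t H)^[c] (padMod t (B (liftCoords (x i)))) := by
  refine add_eq_iterate_of_succ (w := fun i => padMod t (B (liftCoords (x i)))) (fun i => ?_) i c
  calc padMod t (B (liftCoords (x (i + 1))))
      = padMod t (B (G (liftCoords (x i)))) :=
        hB.padMod_congr ht fun r => by rw [liftCoords, padMod_val_natCast, hx]; rfl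
    _ = inducedMap t H (padMod t (B (liftCoords (x i)))) := by rw [hG, hH.padMod_apply]

end Interleaving

/-- for the trajectory mod `2^n` of the conjugate `G = H^B` of a
compatible ergodic `H : ℤ₂ → ℤ₂`, the binary sequence of the `s`-th bit of the
`j`-th coordinate is purely periodic with least period exactly `2^{ms+j+1}`. -/
theorem coordinate_bit_period (m n : ℕ) (hm : 0 < m)
    (B : (Fin m → ℤ_[2]) → ℤ_[2])
    (hB : ∀ (x : Fin m → ℤ_[2]) (k : ℕ),
      bit2 k (B x) = bit2 (k / m) (x ⟨k % m, Nat.mod_lt k hm⟩))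
    (H : ℤ_[2] → ℤ_[2]) (hHc : Compatible H) (hHe : ErgodicZ H)
    (G : (Fin m → ℤ_[2]) → Fin m → ℤ_[2])
    (hG : ∀ x, B (G x) = H (B x))
    (x : ℕ → Fin m → ZMod (2^n))
    (hx : ∀ i : ℕ, x (i+1) = inducedMapM m n G (x i))
    (s : ℕ) (hs : s < n) (j : Fin m) :
    (∀ i : ℕ, bitZM n s (x (i + 2^(m*s + (j : ℕ) + 1)) j) = bitZM n s (x i j)) ∧
    (∀ p : ℕ, 0 < p → (∀ i : ℕ, bitZM n s (x (i + p) j) = bitZM n s (x i j)) →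
      2^(m*s + (j : ℕ) + 1) ≤ p) := by
  have hBI : IsBitInterleaving hm B := hB
  set k := m * s + (j : ℕ)
  have hk : k + 1 ≤ m * n := by
    have := Nat.mul_le_mul_left m (show s + 1 ≤ n from hs)
    rw [Nat.mul_succ] at this
    omega
  have hbit : ∀ i, bitZM n s (x i j) = bit2 k (B (liftCoords (x i))) := fun i => by
    rw [bitZM_eq_bit2, hBI.bit2_apply]; rfl
  have horbit : ∀ t ≤ m * n, ∀ i c,
      padMod t (B (liftCoords (x (i + c)))) = padMod t (B (liftCoords (x i))) ↔ 2 ^ t ∣ c := by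
    intro t ht i c
    rw [hBI.padMod_trajectory hHc hG hx ht, (hHe t).iterate_eq_self_iff, ZMod.card]
  have hper : Periodic (fun i => bitZM n s (x i j)) (2 ^ (k + 1)) := fun i => by
    simp only [hbit]
    exact padMod_eq_padMod_iff_bit2.1 ((horbit _ hk i _).2 dvd_rfl) k k.lt_succ_self
  have hflip : ∀ i, bitZM n s (x (i + 2 ^ k) j) ≠ bitZM n s (x i j) := fun i => by
    rw [hbit, hbit]
    refine bit2_ne_bit2_of_padMod ((horbit k (by omega) i _).2 dvd_rfl) fun h => ?_
    exact absurd ((horbit _ hk i _).1 h) (by simp [Nat.pow_dvd_pow_iff_le_right])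
  exact ⟨hper, fun p hp0 hp => hper.two_pow_succ_le hflip hp hp0⟩
end

section
/- Let {c_j ∈ Z/2 : j = 0,...,M−1}, M odd, satisfy ∑_{j=0}^{M−1} c_j ≡ 0 (mod 2) and suppose the periodic extension {c_{j mod M}} has least period exactly M. Let H_0,...,H_{M−1} be compatible ergodic maps Z_2 → Z_2 and define x_{i+1} = (c'_{i mod M} + H_{i mod M}(x_i)) mod 2^n where c'_j ∈ Z/2^n reduces to c_j mod 2. Then the state sequence {x_i} is purely periodic with period length exactly M·2^n, and every element of Z/2^n occurs exactly M times per period. -/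
open scoped BigOperators

/-!
Let `F` be the composite of the maps `x ↦ c'ᵢ + Hᵢ x` over one period `i = 0, …, M-1` of the
counter. Modulo `2^(k+1)`, `F` lifts its reduction modulo `2^k` and satisfies
`F (a + 2^k) = F a + 2^k`. For such a lift `G` of a single cycle, `G^[2^k]` is the translation by
the drift `∑_{y < 2^k} (G y - y) ∈ {0, 2^k}`, and `G` is a single cycle iff its drift is `2^k`.
Drifts add under composition, adding a constant `c` adds `2^k c`, and an ergodic map has drift
`2^k`; hence `F` has drift `2^k (∑ cᵢ + M) = 2^k` (the sum is even and `M` odd), and by induction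
on `k`, `F` is a single cycle modulo every `2^n`.

So each residue class `i mod M` of times sees every state exactly once per `M·2^n` steps. For
minimality: ergodic maps act as `a ↦ a + 1` modulo 2, so the low bit of the state moves by
`cᵢ + 1` at step `i`; a period of the states is therefore a period of `c`, hence a multiple of `M`,
and then of `M·2^n` because `F` is a single cycle.
-/

open Function Finset

lemma PadicInt.toZModPow_eq_iff_norm_sub_le {p : ℕ} [Fact p.Prime] {m : ℕ} {u v : ℤ_[p]} :
    toZModPow m u = toZModPow m v ↔ ‖u - v‖ ≤ (p : ℝ) ^ (-(m : ℤ)) := by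
  rw [← sub_eq_zero, ← map_sub, ← RingHom.mem_ker, ker_toZModPow, norm_le_pow_iff_mem_span_pow]

lemma padMod_eq_toZModPow (n : ℕ) : padMod n = PadicInt.toZModPow n := rfl

lemma padMod_natCast_val (n : ℕ) (a : ZMod (2 ^ n)) : padMod n (a.val : ℤ_[2]) = a := by
  rw [padMod_eq_toZModPow, map_natCast, ZMod.natCast_zmod_val]

lemma castHom_padMod {m n : ℕ} (h : m ≤ n) (z : ℤ_[2]) :
    ZMod.castHom (pow_dvd_pow 2 h) (ZMod (2 ^ m)) (padMod n z) = padMod m z :=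
  PadicInt.cast_toZModPow m n h z

lemma inducedMap_const_add (n c : ℕ) (f : ℤ_[2] → ℤ_[2]) :
    inducedMap n (fun z => (c : ℤ_[2]) + f z) = fun a => (c : ZMod (2 ^ n)) + inducedMap n f a := by
  funext a
  simp only [inducedMap, padMod_eq_toZModPow, map_add, map_natCast]

namespace Compatible

variable {f : ℤ_[2] → ℤ_[2]}

lemma padMod_congr (hf : Compatible f) {m : ℕ} {u v : ℤ_[2]} (h : padMod m u = padMod m v) :
    padMod m (f u) = padMod m (f v) :=
  PadicInt.toZModPow_eq_iff_norm_sub_le.2 <|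
    (hf u v).trans (PadicInt.toZModPow_eq_iff_norm_sub_le.1 h)

lemma inducedMap_padMod (hf : Compatible f) (m : ℕ) (z : ℤ_[2]) :
    inducedMap m f (padMod m z) = padMod m (f z) :=
  hf.padMod_congr (padMod_natCast_val m _)

lemma semiconj_inducedMap (hf : Compatible f) {m n : ℕ} (h : m ≤ n) :
    Semiconj (ZMod.castHom (pow_dvd_pow 2 h) (ZMod (2 ^ m))) (inducedMap n f) (inducedMap m f) := by
  intro a
  obtain ⟨z, rfl⟩ : ∃ z, padMod n z = a := ⟨_, padMod_natCast_val n a⟩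
  rw [hf.inducedMap_padMod, castHom_padMod h, castHom_padMod h, hf.inducedMap_padMod]

lemma const_add (hf : Compatible f) (c : ℤ_[2]) : Compatible fun z => c + f z := fun x y => by
  simpa only [add_sub_add_left_eq_sub] using hf x y

end Compatible

namespace IsSingleCycle

variable {α : Type*} {g : α → α}

lemma surjective (hg : IsSingleCycle g) : Surjective g := fun b => by
  obtain ⟨k, hk⟩ := hg (g b) b
  exact ⟨g^[k] b, by rw [← iterate_succ_apply' g k b, iterate_succ_apply, hk]⟩

lemma bijective [Finite α] (hg : IsSingleCycle g) : Bijective g :=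
  Finite.surjective_iff_bijective.1 hg.surjective

lemma _root_.Function.injective_iterate_minimalPeriod (g : α → α) (w : α) :
    Injective fun i : Fin (minimalPeriod g w) => g^[i] w :=
  fun i j h => Fin.ext (iterate_injOn_Iio_minimalPeriod i.2 j.2 h)

lemma minimalPeriod_pos (hg : IsSingleCycle g) (w : α) : 0 < minimalPeriod g w := by
  obtain ⟨k, hk⟩ := hg (g w) w
  refine IsPeriodicPt.minimalPeriod_pos k.succ_pos ?_
  rw [IsPeriodicPt, IsFixedPt, iterate_succ_apply, hk]

lemma bijective_iterate_minimalPeriod (hg : IsSingleCycle g) (w : α) :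
    Bijective fun i : Fin (minimalPeriod g w) => g^[i] w := by
  refine ⟨injective_iterate_minimalPeriod g w, fun b => ?_⟩
  obtain ⟨k, rfl⟩ := hg w b
  exact ⟨⟨k % _, Nat.mod_lt _ (hg.minimalPeriod_pos w)⟩, iterate_mod_minimalPeriod_eq⟩

variable [Fintype α]

lemma minimalPeriod_eq_card_s18 (hg : IsSingleCycle g) (w : α) :
    minimalPeriod g w = Fintype.card α := by
  simpa using Fintype.card_congr (Equiv.ofBijective _ (hg.bijective_iterate_minimalPeriod w))

lemma bijective_iterate (hg : IsSingleCycle g) (w : α) :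
    Bijective fun i : Fin (Fintype.card α) => g^[i] w := by
  rw [← hg.minimalPeriod_eq_card_s18 w]
  exact hg.bijective_iterate_minimalPeriod w

lemma iterate_card (hg : IsSingleCycle g) (w : α) : g^[Fintype.card α] w = w := by
  rw [← hg.minimalPeriod_eq_card_s18 w]
  exact iterate_minimalPeriod

lemma card_dvd_of_iterate_eq (hg : IsSingleCycle g) {w : α} {m : ℕ} (h : g^[m] w = w) :
    Fintype.card α ∣ m :=
  hg.minimalPeriod_eq_card_s18 w ▸ IsPeriodicPt.minimalPeriod_dvd h

lemma of_minimalPeriod_eq_card {w : α} (h : minimalPeriod g w = Fintype.card α) :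
    IsSingleCycle g := by
  have hsurj := ((Fintype.bijective_iff_injective_and_card _).2
    ⟨injective_iterate_minimalPeriod g w, by simp [h]⟩).2
  intro a b
  obtain ⟨i, rfl⟩ := hsurj a
  obtain ⟨j, rfl⟩ := hsurj b
  refine ⟨j + (minimalPeriod g w - i), ?_⟩
  rw [← iterate_add_apply, show j + (minimalPeriod g w - i) + i = j + minimalPeriod g w by omega,
    iterate_add_apply, iterate_minimalPeriod]

end IsSingleCycle

def seqIterate {α : Type*} (g : ℕ → α → α) : ℕ → α → α
  | 0 => id
  | m + 1 => g m ∘ seqIterate g m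

section SeqIterate

variable {α β : Type*} {g : ℕ → α → α}

lemma seqIterate_bijective (hg : ∀ i, Bijective (g i)) : ∀ m, Bijective (seqIterate g m)
  | 0 => bijective_id
  | m + 1 => (hg m).comp (seqIterate_bijective hg m)

lemma Function.Semiconj.seqIterate {π : α → β} {gb : ℕ → β → β}
    (h : ∀ i, Semiconj π (g i) (gb i)) : ∀ m, Semiconj π (seqIterate g m) (seqIterate gb m)
  | 0 => Semiconj.id_right
  | m + 1 => (h m).comp_right (Function.Semiconj.seqIterate h m)

variable {M : ℕ}

lemma seqIterate_add_of_periodic (hg : ∀ i, g (i + M) = g i) (i : ℕ) :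
    seqIterate g (i + M) = seqIterate g i ∘ seqIterate g M := by
  induction i with
  | zero => rw [zero_add]; rfl
  | succ i ih =>
    rw [show i + 1 + M = i + M + 1 by omega, seqIterate, ih, hg]
    rfl

lemma seqIterate_add_mul_of_periodic (hg : ∀ i, g (i + M) = g i) (i t : ℕ) :
    seqIterate g (i + M * t) = seqIterate g i ∘ (seqIterate g M)^[t] := by
  induction t generalizing i with
  | zero => rfl
  | succ t ih =>
    rw [show i + M * (t + 1) = i + M * t + M by ring, seqIterate_add_of_periodic hg, ih,
      iterate_succ, comp_assoc]

end SeqIterate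

lemma sum_range_mul_eq_sum_sum {β : Type*} [AddCommMonoid β] (φ : ℕ → β) (M K : ℕ) :
    ∑ i ∈ range (M * K), φ i = ∑ r ∈ range M, ∑ t ∈ range K, φ (r + M * t) := by
  induction K with
  | zero => simp
  | succ K ih =>
    rw [Nat.mul_succ, sum_range_add, ih]
    simp only [sum_range_succ, sum_add_distrib]
    exact congrArg _ (sum_congr rfl fun r _ => by rw [add_comm])

lemma card_filter_range_mul_of_bijective {β : Type*} [Fintype β] [DecidableEq β] {f : ℕ → β}
    {M : ℕ} (hf : ∀ r < M, Bijective fun t : Fin (Fintype.card β) => f (r + M * t)) (b : β) :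
    #{i ∈ range (M * Fintype.card β) | f i = b} = M := by
  rw [card_filter, sum_range_mul_eq_sum_sum]
  trans ∑ r ∈ range M, 1
  swap
  · simp
  refine sum_congr rfl fun r hr => ?_
  rw [← Fin.sum_univ_eq_sum_range (fun t => if f (r + M * t) = b then 1 else 0),
    Fintype.sum_bijective _ (hf r (mem_range.1 hr)) _ (fun a => if a = b then 1 else 0)
      fun _ => rfl]
  simp

section Trajectory

variable {α : Type*} {g : ℕ → α → α} {M : ℕ} {x : ℕ → α}

lemma eq_seqIterate (hx : ∀ i, x (i + 1) = g i (x i)) : ∀ i, x i = seqIterate g i (x 0)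
  | 0 => rfl
  | i + 1 => by rw [hx, eq_seqIterate hx i]; rfl

lemma trajectory_add_mul (hx : ∀ i, x (i + 1) = g i (x i)) (hg : ∀ i, g (i + M) = g i)
    (i t : ℕ) : x (i + M * t) = seqIterate g i ((seqIterate g M)^[t] (x 0)) := by
  rw [eq_seqIterate hx, seqIterate_add_mul_of_periodic hg]
  rfl

variable [Fintype α]

lemma trajectory_add_mul_card (hx : ∀ i, x (i + 1) = g i (x i)) (hg : ∀ i, g (i + M) = g i)
    (hF : IsSingleCycle (seqIterate g M)) (i : ℕ) : x (i + M * Fintype.card α) = x i := by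
  rw [trajectory_add_mul hx hg, hF.iterate_card, ← eq_seqIterate hx]

lemma mul_card_le_of_trajectory_eq (hx : ∀ i, x (i + 1) = g i (x i))
    (hg : ∀ i, g (i + M) = g i) (hF : IsSingleCycle (seqIterate g M)) {p : ℕ} (hp : 0 < p)
    (hMp : M ∣ p) (hxp : x p = x 0) : M * Fintype.card α ≤ p := by
  obtain ⟨q, rfl⟩ := hMp
  have hq : Fintype.card α ∣ q := by
    refine hF.card_dvd_of_iterate_eq (w := x 0) ?_
    rw [← zero_add (M * q), trajectory_add_mul hx hg] at hxp
    exact hxp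
  exact Nat.mul_le_mul_left M (Nat.le_of_dvd (Nat.pos_of_mul_pos_left hp) hq)

lemma card_filter_trajectory_eq [DecidableEq α] (hx : ∀ i, x (i + 1) = g i (x i))
    (hg : ∀ i, g (i + M) = g i) (hF : IsSingleCycle (seqIterate g M))
    (hbij : ∀ i, Bijective (g i)) (a : α) : #{i ∈ range (M * Fintype.card α) | x i = a} = M :=
  card_filter_range_mul_of_bijective (fun r _ => by
    simpa only [trajectory_add_mul hx hg, comp_def] using
      (seqIterate_bijective hbij r).comp (hF.bijective_iterate (x 0))) a

end Trajectory

lemma sum_range_mod_eq_sum_fin {β : Type*} [AddCommMonoid β] {M : ℕ} (hM : 0 < M)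
    (f : Fin M → β) : ∑ i ∈ range M, f ⟨i % M, Nat.mod_lt _ hM⟩ = ∑ j, f j := by
  rw [← Fin.sum_univ_eq_sum_range (fun i => f ⟨i % M, Nat.mod_lt _ hM⟩)]
  exact sum_congr rfl fun j _ => congrArg f (Fin.ext (Nat.mod_eq_of_lt j.2))

lemma dvd_of_periodic_of_forall_lt_exists_ne {β : Type*} {M : ℕ} (hM : 0 < M) {c : Fin M → β}
    (hper : ∀ p : ℕ, 0 < p → p < M →
      ∃ j : ℕ, c ⟨(j + p) % M, Nat.mod_lt _ hM⟩ ≠ c ⟨j % M, Nat.mod_lt _ hM⟩)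
    {p : ℕ} (hp : ∀ j : ℕ, c ⟨(j + p) % M, Nat.mod_lt _ hM⟩ = c ⟨j % M, Nat.mod_lt _ hM⟩) :
    M ∣ p := by
  refine Nat.dvd_of_mod_eq_zero (by_contra fun hpM => ?_)
  obtain ⟨j, hj⟩ := hper (p % M) (Nat.pos_of_ne_zero hpM) (Nat.mod_lt _ hM)
  exact hj (by simpa only [Nat.add_mod_mod] using hp j)

def reduceMod (N : ℕ) : ZMod (N * 2) →+* ZMod N := ZMod.castHom (dvd_mul_right N 2) (ZMod N)

noncomputable def drift {N : ℕ} [NeZero N] (G : ZMod (N * 2) → ZMod (N * 2)) : ZMod (N * 2) :=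
  ∑ y : ZMod N, (G y.val - y.val)

section Drift

variable {N : ℕ}

lemma natCast_add_natCast_zmod_mul_two : (N : ZMod (N * 2)) + N = 0 := by
  rw [← Nat.cast_add, ← mul_two, ZMod.natCast_self]

variable [NeZero N]

lemma IsSingleCycle.iterate_zmod {g : ZMod N → ZMod N} (hg : IsSingleCycle g) (y : ZMod N) :
    g^[N] y = y := by
  simpa only [ZMod.card] using hg.iterate_card y

lemma reduceMod_natCast_val (y : ZMod N) : reduceMod N (y.val : ZMod (N * 2)) = y := by
  rw [map_natCast, ZMod.natCast_zmod_val]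

lemma natCast_ne_zero_zmod_mul_two : (N : ZMod (N * 2)) ≠ 0 := by
  rw [Ne, ZMod.natCast_eq_zero_iff]
  intro h
  have := Nat.le_of_dvd (NeZero.pos N) h
  have := NeZero.pos N
  omega

lemma eq_or_eq_add_of_reduceMod_eq {a b : ZMod (N * 2)} (h : reduceMod N a = reduceMod N b) :
    b = a ∨ b = a + N := by
  obtain ⟨j, hj⟩ : N ∣ (b - a).val := by
    rw [← ZMod.natCast_eq_zero_iff, ← map_natCast (reduceMod N), ZMod.natCast_zmod_val, map_sub,
      h, sub_self]
  have hj2 : j < 2 := by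
    have := ZMod.val_lt (b - a)
    rw [hj] at this
    exact Nat.lt_of_mul_lt_mul_left this
  interval_cases j
  · left
    rwa [mul_zero, ZMod.val_eq_zero, sub_eq_zero] at hj
  · right
    rw [← sub_eq_iff_eq_add', ← ZMod.natCast_zmod_val (b - a), hj, mul_one]

variable {G G' : ZMod (N * 2) → ZMod (N * 2)} {Gb Gb' : ZMod N → ZMod N}

lemma apply_add_natCast_of_semiconj (hG : Semiconj (reduceMod N) G Gb) (hinj : Injective G)
    (a : ZMod (N * 2)) : G (a + N) = G a + N := by
  have hred : reduceMod N (G a) = reduceMod N (G (a + N)) := by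
    rw [hG, hG, map_add, map_natCast, ZMod.natCast_self, add_zero]
  refine (eq_or_eq_add_of_reduceMod_eq hred).resolve_left fun h => ?_
  exact natCast_ne_zero_zmod_mul_two (add_eq_left.1 (hinj h))

lemma sub_eq_sub_of_reduceMod_eq (hG : Semiconj (reduceMod N) G Gb) (hinj : Injective G)
    {a b : ZMod (N * 2)} (h : reduceMod N a = reduceMod N b) : G b - b = G a - a := by
  rcases eq_or_eq_add_of_reduceMod_eq h with rfl | rfl
  · rfl
  · rw [apply_add_natCast_of_semiconj hG hinj]
    ring

lemma iterate_eq_add_sum (hG : Semiconj (reduceMod N) G Gb) (hinj : Injective G)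
    (a : ZMod (N * 2)) (m : ℕ) : G^[m] a = a + ∑ j ∈ range m,
      (G (Gb^[j] (reduceMod N a)).val - (Gb^[j] (reduceMod N a)).val) := by
  induction m with
  | zero => simp
  | succ m ih =>
    rw [iterate_succ_apply', sum_range_succ, ← add_assoc, ← ih, ← (hG.iterate_right m) a,
      sub_eq_sub_of_reduceMod_eq hG hinj (reduceMod_natCast_val _).symm, add_sub_cancel]

lemma iterate_eq_add_drift (hG : Semiconj (reduceMod N) G Gb) (hinj : Injective G)
    (hGb : IsSingleCycle Gb) (a : ZMod (N * 2)) : G^[N] a = a + drift G := by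
  have henum := hGb.bijective_iterate (reduceMod N a)
  rw [ZMod.card] at henum
  rw [iterate_eq_add_sum hG hinj, drift, ← Fin.sum_univ_eq_sum_range]
  exact congrArg _ (Fintype.sum_bijective _ henum _ _ fun _ => rfl)

lemma drift_eq_zero_or_eq (hG : Semiconj (reduceMod N) G Gb) (hinj : Injective G)
    (hGb : IsSingleCycle Gb) : drift G = 0 ∨ drift G = N := by
  have hret : reduceMod N 0 = reduceMod N (G^[N] 0) := by
    rw [hG.iterate_right N 0, hGb.iterate_zmod]
  simpa [iterate_eq_add_drift hG hinj hGb] using eq_or_eq_add_of_reduceMod_eq hret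

theorem isSingleCycle_iff_drift_eq (hG : Semiconj (reduceMod N) G Gb) (hinj : Injective G)
    (hGb : IsSingleCycle Gb) : IsSingleCycle G ↔ drift G = N := by
  have hN := NeZero.pos N
  constructor
  · refine fun h => (drift_eq_zero_or_eq hG hinj hGb).resolve_left fun h0 => ?_
    have := h.card_dvd_of_iterate_eq (w := 0) (m := N) (by
      rw [iterate_eq_add_drift hG hinj hGb, h0, add_zero])
    rw [ZMod.card] at this
    have := Nat.le_of_dvd hN this
    omega
  · intro hd
    refine IsSingleCycle.of_minimalPeriod_eq_card (w := 0) ?_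
    have hGN a : G^[N] a = a + N := by rw [iterate_eq_add_drift hG hinj hGb, hd]
    have h2N : IsPeriodicPt G (N * 2) 0 := by
      rw [IsPeriodicPt, IsFixedPt, iterate_mul, iterate_succ_apply', iterate_one, hGN, hGN,
        zero_add, natCast_add_natCast_zmod_mul_two]
    have hNp : N ∣ minimalPeriod G 0 := by
      have := hGb.card_dvd_of_iterate_eq (w := reduceMod N 0) (m := minimalPeriod G 0) (by
        rw [← hG.iterate_right, iterate_minimalPeriod])
      rwa [ZMod.card] at this
    have hpN : minimalPeriod G 0 ≠ N := fun h => natCast_ne_zero_zmod_mul_two <| by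
      have := iterate_minimalPeriod (f := G) (x := 0)
      rwa [h, hGN, zero_add] at this
    obtain ⟨j, hj⟩ := hNp
    have hj2 : j ∣ 2 := Nat.dvd_of_mul_dvd_mul_left hN (hj ▸ h2N.minimalPeriod_dvd)
    have : j ≤ 2 := Nat.le_of_dvd two_pos hj2
    rw [ZMod.card, hj]
    interval_cases j <;> simp_all

lemma drift_comp (hG : Semiconj (reduceMod N) G Gb) (hinj : Injective G)
    (hG' : Semiconj (reduceMod N) G' Gb') (hGb' : Bijective Gb') :
    drift (G ∘ G') = drift G + drift G' := by
  calc drift (G ∘ G')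
      = ∑ y : ZMod N, ((G (G' y.val) - G' y.val) + (G' y.val - y.val)) := by
        simp only [drift, comp_apply, sub_add_sub_cancel]
    _ = ∑ y : ZMod N, (G (Gb' y).val - (Gb' y).val) + drift G' := by
        rw [sum_add_distrib, drift]
        congr 1
        refine sum_congr rfl fun y _ => sub_eq_sub_of_reduceMod_eq hG hinj ?_
        rw [reduceMod_natCast_val, hG', reduceMod_natCast_val]
    _ = drift G + drift G' := by
        rw [drift]
        congr 1
        exact Fintype.sum_bijective _ hGb' _ _ fun _ => rfl

lemma drift_const_add (C : ZMod (N * 2)) (G : ZMod (N * 2) → ZMod (N * 2)) :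
    drift (fun a => C + G a) = N * C + drift G := by
  simp only [drift, add_sub_assoc, sum_add_distrib, sum_const, card_univ, ZMod.card, nsmul_eq_mul]

lemma drift_seqIterate {G : ℕ → ZMod (N * 2) → ZMod (N * 2)} {Gb : ℕ → ZMod N → ZMod N}
    (hG : ∀ i, Semiconj (reduceMod N) (G i) (Gb i)) (hinj : ∀ i, Injective (G i))
    (hGb : ∀ i, Bijective (Gb i)) : ∀ m, drift (seqIterate G m) = ∑ i ∈ range m, drift (G i)
  | 0 => by simp [drift, seqIterate]
  | m + 1 => by
    rw [seqIterate, drift_comp (hG m) (hinj m) (Semiconj.seqIterate hG m)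
      (seqIterate_bijective hGb m), drift_seqIterate hG hinj hGb m, sum_range_succ, add_comm]

end Drift

namespace ErgodicZ

variable {f : ℤ_[2] → ℤ_[2]}

lemma drift_inducedMap (herg : ErgodicZ f) (hf : Compatible f) (k : ℕ) :
    drift (N := 2 ^ k) (inducedMap (k + 1) f) = 2 ^ k := by
  exact_mod_cast (isSingleCycle_iff_drift_eq (hf.semiconj_inducedMap k.le_succ)
    (herg (k + 1)).bijective.1 (herg k)).1 (herg (k + 1))

lemma inducedMap_one (herg : ErgodicZ f) (hf : Compatible f) (a : ZMod (2 ^ 1)) :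
    inducedMap 1 f a = a + 1 := by
  simpa [herg.drift_inducedMap hf 0] using iterate_eq_add_drift (N := 2 ^ 0)
    (hf.semiconj_inducedMap (Nat.le_succ 0)) (herg 1).bijective.1 (herg 0) a

end ErgodicZ

section CounterDependent

variable {M : ℕ} {c : ℕ → ℕ} {H : ℕ → ℤ_[2] → ℤ_[2]}

theorem isSingleCycle_seqIterate_inducedMap (hcomp : ∀ i, Compatible (H i))
    (herg : ∀ i, ErgodicZ (H i)) (hc : Odd (∑ i ∈ range M, (c i + 1))) (k : ℕ) :
    IsSingleCycle (seqIterate (fun i => inducedMap k fun z => (c i : ℤ_[2]) + H i z) M) := by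
  induction k with
  | zero =>
    have : Subsingleton (ZMod (2 ^ 0)) := inferInstanceAs (Subsingleton (ZMod 1))
    exact fun a b => ⟨0, Subsingleton.elim _ _⟩
  | succ k ih =>
    have hsemi i := ((hcomp i).const_add (c i)).semiconj_inducedMap k.le_succ
    have hbij i n : Bijective (inducedMap n fun z => (c i : ℤ_[2]) + H i z) := by
      rw [inducedMap_const_add]
      exact (Equiv.addLeft _).bijective.comp (herg i n).bijective
    refine (isSingleCycle_iff_drift_eq (N := 2 ^ k) (Semiconj.seqIterate hsemi M)
      (seqIterate_bijective (fun i => hbij i _) M).1 ih).2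
      ((drift_seqIterate hsemi (fun i => (hbij i _).1) (fun i => hbij i _) M).trans ?_)
    have hdrift i : drift (N := 2 ^ k) (inducedMap (k + 1) fun z => (c i : ℤ_[2]) + H i z) =
        ((2 ^ k : ℕ) : ZMod (2 ^ k * 2)) * c i + 2 ^ k := by
      rw [inducedMap_const_add]
      exact (drift_const_add _ _).trans (congrArg _ ((herg i).drift_inducedMap (hcomp i) k))
    rw [sum_congr rfl fun i _ => hdrift i]
    obtain ⟨t, ht⟩ := hc
    calc ∑ i ∈ range M, (((2 ^ k : ℕ) : ZMod (2 ^ k * 2)) * c i + 2 ^ k)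
        = ((2 ^ k * ∑ i ∈ range M, (c i + 1) : ℕ) : ZMod (2 ^ k * 2)) := by
          push_cast
          rw [mul_sum]
          exact sum_congr rfl fun i _ => by ring
      _ = ((2 ^ k * 2 * t + 2 ^ k : ℕ) : ZMod (2 ^ k * 2)) := by rw [ht]; congr 1; ring
      _ = (2 ^ k : ℕ) := by rw [Nat.cast_add, Nat.cast_mul, ZMod.natCast_self, zero_mul, zero_add]

lemma natCast_periodic_of_trajectory_periodic (hcomp : ∀ i, Compatible (H i))
    (herg : ∀ i, ErgodicZ (H i)) {n : ℕ} (hn : 1 ≤ n) {x : ℕ → ZMod (2 ^ n)}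
    (hx : ∀ i, x (i + 1) = inducedMap n (fun z => (c i : ℤ_[2]) + H i z) (x i)) {p : ℕ}
    (hp : ∀ i, x (i + p) = x i) (i : ℕ) : (c (i + p) : ZMod 2) = c i := by
  have hstep j : ZMod.castHom (pow_dvd_pow 2 hn) (ZMod (2 ^ 1)) (x (j + 1)) =
      ZMod.castHom (pow_dvd_pow 2 hn) (ZMod (2 ^ 1)) (x j) + (c j + 1) := by
    rw [hx, ((hcomp j).const_add _).semiconj_inducedMap hn (x j), inducedMap_const_add]
    dsimp only
    rw [(herg j).inducedMap_one (hcomp j)]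
    ring
  have h := hstep (i + p)
  rw [add_right_comm, hp, hp, hstep i] at h
  exact (add_right_cancel (add_left_cancel h)).symm

end CounterDependent

/-- univariate counter-dependent generator: let `M` be odd,
`c : Fin M → ZMod 2` with even sum and least period of its periodic extension
exactly `M`; let `H_j` be compatible ergodic maps and `c'_j ∈ Z/2^n` reduce to
`c_j` mod 2. Then the states `x_{i+1} = (c'_{i mod M} + H_{i mod M}(x_i)) mod 2^n`
form a purely periodic sequence of least period exactly `M·2^n`, and every
element of `Z/2^n` occurs exactly `M` times per period. -/
theorem counter_dependent_generator (M n : ℕ) (hM : Odd M)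
    (hMpos : 0 < M) (hn : 1 ≤ n)
    (c : Fin M → ZMod 2)
    (hsum : ∑ j : Fin M, c j = 0)
    (hper : ∀ p : ℕ, 0 < p → p < M →
      ∃ j : ℕ, c ⟨(j + p) % M, Nat.mod_lt _ hMpos⟩ ≠ c ⟨j % M, Nat.mod_lt _ hMpos⟩)
    (H : Fin M → ℤ_[2] → ℤ_[2])
    (hH : ∀ j : Fin M, Compatible (H j) ∧ ErgodicZ (H j))
    (c' : Fin M → ZMod (2^n))
    (hc' : ∀ j : Fin M, (((c' j).val : ℕ) : ZMod 2) = c j)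
    (x : ℕ → ZMod (2^n))
    (hx : ∀ i : ℕ, x (i+1) =
      padMod n ((((c' ⟨i % M, Nat.mod_lt _ hMpos⟩).val : ℕ) : ℤ_[2]) +
        H ⟨i % M, Nat.mod_lt _ hMpos⟩ (((x i).val : ℕ) : ℤ_[2]))) :
    ((∀ i : ℕ, x (i + M * 2^n) = x i) ∧
      (∀ p : ℕ, 0 < p → (∀ i : ℕ, x (i + p) = x i) → M * 2^n ≤ p)) ∧
    (∀ a : ZMod (2^n),
      ((Finset.range (M * 2^n)).filter (fun i => x i = a)).card = M) := by
  set cval : ℕ → ℕ := fun i => (c' ⟨i % M, Nat.mod_lt _ hMpos⟩).val with hcval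
  set g : ℕ → ZMod (2 ^ n) → ZMod (2 ^ n) := fun i =>
    inducedMap n fun z => (cval i : ℤ_[2]) + H ⟨i % M, Nat.mod_lt _ hMpos⟩ z
  have hg i : g (i + M) = g i := by simp only [g, cval, Nat.add_mod_right]
  have hcomp i : Compatible (H ⟨i % M, Nat.mod_lt _ hMpos⟩) := (hH _).1
  have herg i : ErgodicZ (H ⟨i % M, Nat.mod_lt _ hMpos⟩) := (hH _).2
  have hbij i : Function.Bijective (g i) := by
    simp only [g, inducedMap_const_add]
    exact (Equiv.addLeft _).bijective.comp ((herg i) n).bijective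
  have hodd : Odd (∑ i ∈ range M, (cval i + 1)) := by
    have heven : Even (∑ i ∈ range M, cval i) := by
      rw [← ZMod.natCast_eq_zero_iff_even, Nat.cast_sum]
      simpa only [hcval, hc', sum_range_mod_eq_sum_fin hMpos] using hsum
    rw [sum_add_distrib, sum_const, card_range, smul_eq_mul, mul_one]
    exact heven.add_odd hM
  have hF : IsSingleCycle (seqIterate g M) :=
    isSingleCycle_seqIterate_inducedMap hcomp herg hodd n
  have hMp p (hpx : ∀ i, x (i + p) = x i) : M ∣ p :=
    dvd_of_periodic_of_forall_lt_exists_ne hMpos hper fun j => by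
      simpa only [← hc'] using natCast_periodic_of_trajectory_periodic hcomp herg hn hx hpx j
  refine ⟨⟨fun i => ?_, fun p hp hpx => ?_⟩, fun a => ?_⟩
  · simpa only [ZMod.card] using trajectory_add_mul_card hx hg hF i
  · simpa only [ZMod.card] using
      mul_card_le_of_trajectory_eq hx hg hF hp (hMp p hpx) (by simpa using hpx 0)
  · simpa only [ZMod.card] using card_filter_trajectory_eq hx hg hF hbij a
end
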